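/- arXiv:1303.5046 — 7 statements merged into one kernel-verified Lean document; each statement's English description precedes it below -/
import Mathlib

section
/- For p ∈ (0, ∞), the map M ↦ tr(M^{-p}) is strictly antitonic on positive definite matrices: if M₁, M₂ are symmetric positive definite with M₂ - M₁ positive semidefinite and M₁ ≠ M₂, then tr(M₂^{-p}) < tr(M₁^{-p}); hence Φ_p⁺ is strictly isotonic on positive definite matrices. -/
open Matrix Real

/-- Real power of a square matrix, via spectral decomposition when the matrix
is Hermitian (symmetric), and junk value `0` otherwise. -/
noncomputable def matRpow {m : ℕ} (M : Matrix (Fin m) (Fin m) ℝ) (r : ℝ) :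
    Matrix (Fin m) (Fin m) ℝ :=
  if h : M.IsHermitian then
    (h.eigenvectorUnitary : Matrix (Fin m) (Fin m) ℝ) *
      Matrix.diagonal (fun i => h.eigenvalues i ^ r) *
      star (h.eigenvectorUnitary : Matrix (Fin m) (Fin m) ℝ)
  else 0

/-- The positively homogeneous Kiefer criterion Φ_p⁺. -/
noncomputable def PhiP (m : ℕ) (p : ℝ) (N : Matrix (Fin m) (Fin m) ℝ) : ℝ :=
  ((1 / (m : ℝ)) * (matRpow N (-p)).trace) ^ (-1 / p)

/-! Diagonalize `M₂ = U diag(μ₂) Uᵀ` and read `M₁` in the same orthonormal basis. As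
`M₂ - M₁ ⪰ 0` is nonzero, the diagonal entries `cᵢ` of `Uᵀ M₁ U` satisfy `cᵢ ≤ μ₂ᵢ`, and
`∑ cᵢ < ∑ μ₂ᵢ` since the traces differ; `t ↦ t ^ (-p)` being strictly decreasing, this gives
`∑ μ₂ᵢ ^ (-p) < ∑ cᵢ ^ (-p)`. Peierls' inequality for the convex function `t ↦ t ^ (-p)` bounds
`∑ cᵢ ^ (-p)` by `∑ μ₁ᵢ ^ (-p)`. Finally `Φ_p⁺` is the trace followed by the decreasing map
`t ↦ (t / m) ^ (-1 / p)`. -/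

open Finset

lemma convexOn_rpow_of_nonpos {p : ℝ} (hp : p ≤ 0) :
    ConvexOn ℝ (Set.Ioi 0) fun x : ℝ ↦ x ^ p := by
  have hlog : ConvexOn ℝ (Set.Ioi 0) fun x ↦ log x * p := by
    refine (strictConcaveOn_log_Ioi.concaveOn.smul (neg_nonneg.2 hp)).neg.congr fun x _ ↦ ?_
    simp only [Pi.neg_apply, smul_eq_mul]
    ring
  refine ⟨convex_Ioi 0, fun x hx y hy a b ha hb hab ↦ ?_⟩
  have hxy : 0 < a • x + b • y := convex_Ioi 0 hx hy ha hb hab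
  calc (a • x + b • y) ^ p = exp (log (a • x + b • y) * p) := rpow_def_of_pos hxy p
    _ ≤ exp (a • (log x * p) + b • (log y * p)) := exp_le_exp.2 (hlog.2 hx hy ha hb hab)
    _ ≤ a • exp (log x * p) + b • exp (log y * p) :=
      convexOn_exp.2 (Set.mem_univ _) (Set.mem_univ _) ha hb hab
    _ = a • x ^ p + b • y ^ p := by rw [rpow_def_of_pos hx, rpow_def_of_pos hy]

lemma sum_lt_sum_of_strictAntiOn {ι : Type*} [Fintype ι] {f : ℝ → ℝ} {s : Set ℝ}
    (hf : StrictAntiOn f s) {c d : ι → ℝ} (hc : ∀ i, c i ∈ s) (hd : ∀ i, d i ∈ s)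
    (hcd : ∀ i, c i ≤ d i) (hsum : ∑ i, c i < ∑ i, d i) :
    ∑ i, f (d i) < ∑ i, f (c i) := by
  obtain ⟨i, -, hi⟩ := exists_lt_of_sum_lt hsum
  exact sum_lt_sum (fun j _ ↦ hf.antitoneOn (hc j) (hd j) (hcd j))
    ⟨i, mem_univ _, hf (hc i) (hd i) hi⟩

namespace Matrix

variable {n : Type*} [Fintype n]

lemma PosSemidef.trace_lt_trace {A B : Matrix n n ℝ} (h : (B - A).PosSemidef) (hne : A ≠ B) :
    A.trace < B.trace := by
  have := h.trace_nonneg.lt_of_ne' fun h0 ↦ hne (sub_eq_zero.1 (h.trace_eq_zero_iff.1 h0)).symm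
  rwa [trace_sub, sub_pos] at this

variable [DecidableEq n]

lemma trace_star_mul_mul_of_mem_unitaryGroup {U : Matrix n n ℝ}
    (hU : U ∈ unitaryGroup n ℝ) (A : Matrix n n ℝ) : (star U * A * U).trace = A.trace := by
  rw [trace_mul_cycle, mem_unitaryGroup_iff.1 hU, one_mul]

-- Peierls' inequality: the squared columns and rows of `Q` are probability vectors, so Jensen
-- applies to each diagonal entry and the weights sum back to one.
lemma sum_convexOn_diag_conj_diagonal_le {f : ℝ → ℝ} {s : Set ℝ} (hf : ConvexOn ℝ s f)
    {μ : n → ℝ} (hμ : ∀ j, μ j ∈ s) {Q : Matrix n n ℝ} (hQ : Q ∈ unitaryGroup n ℝ) :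
    ∑ i, f ((star Q * diagonal μ * Q) i i) ≤ ∑ j, f (μ j) := by
  have hdiag : ∀ i, (star Q * diagonal μ * Q) i i = ∑ j, Q j i ^ 2 * μ j := fun i ↦ by
    rw [mul_apply]
    simp only [mul_diagonal, star_apply, star_trivial]
    exact sum_congr rfl fun j _ ↦ by ring
  have hcol : ∀ i, ∑ j, Q j i ^ 2 = 1 := fun i ↦ by
    have := congrFun₂ (mem_unitaryGroup_iff'.1 hQ) i i
    simpa [mul_apply, sq] using this
  have hrow : ∀ j, ∑ i, Q j i ^ 2 = 1 := fun j ↦ by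
    have := congrFun₂ (mem_unitaryGroup_iff.1 hQ) j j
    simpa [mul_apply, sq] using this
  calc ∑ i, f ((star Q * diagonal μ * Q) i i) ≤ ∑ i, ∑ j, Q j i ^ 2 * f (μ j) :=
        sum_le_sum fun i _ ↦ hdiag i ▸
          hf.map_sum_le (fun j _ ↦ sq_nonneg _) (hcol i) fun j _ ↦ hμ j
    _ = ∑ j, f (μ j) := by rw [sum_comm]; simp [← sum_mul, hrow]

lemma IsHermitian.star_eigenvectorUnitary_mul_mul_eigenvectorUnitary {A : Matrix n n ℝ}
    (hA : A.IsHermitian) :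
    star (hA.eigenvectorUnitary : Matrix n n ℝ) * A * hA.eigenvectorUnitary =
      diagonal hA.eigenvalues := by
  simpa [Unitary.conjStarAlgAut_apply, RCLike.ofReal_real_eq_id] using
    hA.conjStarAlgAut_star_eigenvectorUnitary

lemma IsHermitian.sum_convexOn_diag_conj_le {A U : Matrix n n ℝ} (hA : A.IsHermitian)
    {f : ℝ → ℝ} {s : Set ℝ} (hf : ConvexOn ℝ s f) (hs : ∀ j, hA.eigenvalues j ∈ s)
    (hU : U ∈ unitaryGroup n ℝ) :
    ∑ i, f ((star U * A * U) i i) ≤ ∑ j, f (hA.eigenvalues j) := by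
  set V : Matrix n n ℝ := (hA.eigenvectorUnitary : Matrix n n ℝ)
  have hV : V * star V = 1 := mem_unitaryGroup_iff.1 hA.eigenvectorUnitary.2
  have hconj : star U * A * U = star (star V * U) * diagonal hA.eigenvalues * (star V * U) := by
    rw [← hA.star_eigenvectorUnitary_mul_mul_eigenvectorUnitary, star_mul, star_star]
    calc star U * A * U = star U * (V * star V) * A * (V * star V) * U := by
          rw [hV, mul_one, mul_one]
      _ = star U * V * (star V * A * V) * (star V * U) := by noncomm_ring
  rw [hconj]
  exact sum_convexOn_diag_conj_diagonal_le hf hs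
    (mul_mem (Unitary.star_mem hA.eigenvectorUnitary.2) hU)

lemma sum_diag_conj_lt_of_strictAntiOn {A B U : Matrix n n ℝ} (hU : U ∈ unitaryGroup n ℝ)
    (h : (B - A).PosSemidef) (hne : A ≠ B) {f : ℝ → ℝ} {s : Set ℝ} (hf : StrictAntiOn f s)
    (hA : ∀ i, (star U * A * U) i i ∈ s) (hB : ∀ i, (star U * B * U) i i ∈ s) :
    ∑ i, f ((star U * B * U) i i) < ∑ i, f ((star U * A * U) i i) := by
  refine sum_lt_sum_of_strictAntiOn hf hA hB (fun i ↦ ?_) ?_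
  · have := (h.conjTranspose_mul_mul_same U).diag_nonneg (i := i)
    rwa [← star_eq_conjTranspose, mul_sub, sub_mul, sub_apply, sub_nonneg] at this
  · have := h.trace_lt_trace hne
    rwa [← trace_star_mul_mul_of_mem_unitaryGroup hU A,
      ← trace_star_mul_mul_of_mem_unitaryGroup hU B] at this

end Matrix

lemma trace_matRpow {m : ℕ} {M : Matrix (Fin m) (Fin m) ℝ} (hM : M.IsHermitian) (r : ℝ) :
    (matRpow M r).trace = ∑ i, hM.eigenvalues i ^ r := by
  rw [matRpow, dif_pos hM, trace_mul_cycle,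
    mem_unitaryGroup_iff'.1 hM.eigenvectorUnitary.2, one_mul, trace_diagonal]

/-- For p > 0, M ↦ tr(M^{-p}) is strictly antitonic on positive definite
matrices in the Löwner order, hence Φ_p⁺ is strictly isotonic. -/
theorem stmt2 (m : ℕ) (hm : 1 ≤ m) (p : ℝ) (hp : 0 < p)
    (M₁ M₂ : Matrix (Fin m) (Fin m) ℝ) (h₁ : M₁.PosDef) (h₂ : M₂.PosDef)
    (hle : (M₂ - M₁).PosSemidef) (hne : M₁ ≠ M₂) :
    (matRpow M₂ (-p)).trace < (matRpow M₁ (-p)).trace ∧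
    PhiP m p M₁ < PhiP m p M₂ := by
  set U : Matrix (Fin m) (Fin m) ℝ := (h₂.1.eigenvectorUnitary : Matrix (Fin m) (Fin m) ℝ)
  have hU : U ∈ unitaryGroup (Fin m) ℝ := h₂.1.eigenvectorUnitary.2
  have hconj_pos {M : Matrix (Fin m) (Fin m) ℝ} (hM : M.PosDef) (i : Fin m) :
      0 < (star U * M * U) i i :=
    ((Unitary.isUnit_coe (U := ⟨U, hU⟩)).posDef_star_left_conjugate_iff.2 hM).diag_pos
  have htrace : (matRpow M₂ (-p)).trace < (matRpow M₁ (-p)).trace := by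
    rw [trace_matRpow h₂.1, trace_matRpow h₁.1]
    calc ∑ i, h₂.1.eigenvalues i ^ (-p) = ∑ i, (star U * M₂ * U) i i ^ (-p) := by
          simp [U, h₂.1.star_eigenvectorUnitary_mul_mul_eigenvectorUnitary]
      _ < ∑ i, (star U * M₁ * U) i i ^ (-p) :=
          sum_diag_conj_lt_of_strictAntiOn hU hle hne
            (strictAntiOn_rpow_Ioi_of_exponent_neg (neg_neg_of_pos hp))
            (hconj_pos h₁) (hconj_pos h₂)
      _ ≤ ∑ i, h₁.1.eigenvalues i ^ (-p) :=
          h₁.1.sum_convexOn_diag_conj_le (convexOn_rpow_of_nonpos (neg_nonpos.2 hp.le))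
            h₁.eigenvalues_pos hU
  have : Nonempty (Fin m) := ⟨⟨0, hm⟩⟩
  have htrace_pos : 0 < (matRpow M₂ (-p)).trace := by
    rw [trace_matRpow h₂.1]
    exact sum_pos (fun i _ ↦ rpow_pos_of_pos (h₂.eigenvalues_pos i) _) univ_nonempty
  have hm_pos : (0 : ℝ) < 1 / m := by positivity
  exact ⟨htrace, rpow_lt_rpow_of_neg (mul_pos hm_pos htrace_pos)
    (mul_lt_mul_of_pos_left htrace hm_pos) (div_neg_of_neg_of_pos (by norm_num) hp)⟩
end

section
/- Fix p > -1, α ∈ (0,1), β ≥ 0, and γ* > 0 with (α/γ*)^{1/(p+1)} < (1/γ*)^{1/(p+1)} ≤ (1+β)/α. Consider the system α·ω₁ + (1-α)·ω₂ = 1+β and α/ω₁^{p+1} + (1-α)/ω₂^{p+1} = γ* with constraint 0 < ω₁ ≤ ω₂. If additionally (1+β)·γ*^{1/(p+1)} ≥ 1 (which holds when γ* ∈ [(1+β)^{-p}, 1] for p ≥ 0 or γ* ∈ [1, (1+β)^{-p}] for p ≤ 0), then this system has a unique solution (ω₁, ω₂), and ω₁ lies in the half-open interval ((α/γ*)^{1/(p+1)},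 (1/γ*)^{1/(p+1)}]. -/
/-!
Write `q = p + 1` and `c = 1 + β`. The linear equation determines `ω₂` from `ω₁`, so the system
reduces to `φ ω₁ = γ*` with `φ x = α x^(-q) + (1 - α) ω₂(x)^(-q)`. Any solution has
`ω₁ ≤ c ≤ ω₂`, and on `(0, c]` the derivative `α q (ω₂^(-q-1) - x^(-q-1))` is negative because
`x ≤ ω₂`, so `φ` is strictly decreasing there: uniqueness. Since `ω₁ ≤ ω₂`, the value `φ ω₁` lies in
`(α ω₁^(-q), ω₁^(-q)]`, which locates `ω₁` in the stated interval `(a, b]`; the same bounds give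
`φ a > γ* ≥ φ b`, and `(1 + β) γ*^(1/q) ≥ 1` says exactly `b ≤ c`, so the intermediate value
theorem on `[a, b]` produces a solution.
-/

open Real Set

noncomputable section TwoPointSystem

variable {α c q γ x y : ℝ}

/-- The `ω₂` assigned to `ω₁ = x` by the constraint `α ω₁ + (1 - α) ω₂ = c`. -/
def partner (α c x : ℝ) : ℝ := (c - α * x) / (1 - α)

def invPowMean (α c q x : ℝ) : ℝ := α * x ^ (-q) + (1 - α) * partner α c x ^ (-q)

/-- The system of the theorem, with `c = 1 + β` and `q = p + 1`. -/
def IsSolution (α c q γ : ℝ) (w : ℝ × ℝ) : Prop :=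
  0 < w.1 ∧ w.1 ≤ w.2 ∧ α * w.1 + (1 - α) * w.2 = c ∧ α / w.1 ^ q + (1 - α) / w.2 ^ q = γ

lemma weighted_sum_partner (hα : α < 1) : α * x + (1 - α) * partner α c x = c := by
  have : 1 - α ≠ 0 := by linarith
  unfold partner
  field_simp
  ring

lemma eq_partner_of_weighted_sum (hα : α < 1) (h : α * x + (1 - α) * y = c) :
    y = partner α c x := by
  have : 1 - α ≠ 0 := by linarith
  unfold partner
  field_simp
  linarith

lemma le_partner (hα : α < 1) (hx : x ≤ c) : x ≤ partner α c x := by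
  unfold partner
  rw [le_div_iff₀ (by linarith)]
  nlinarith

lemma lt_partner (hα : α < 1) (hx : x < c) : x < partner α c x := by
  unfold partner
  rw [lt_div_iff₀ (by linarith)]
  nlinarith

lemma invPowMean_eq (hx : 0 < x) (hy : 0 < partner α c x) :
    invPowMean α c q x = α / x ^ q + (1 - α) / partner α c x ^ q := by
  simp only [invPowMean, rpow_neg hx.le, rpow_neg hy.le, div_eq_mul_inv]

lemma hasDerivAt_invPowMean (hα : α < 1) (hx : 0 < x) (hy : 0 < partner α c x) :
    HasDerivAt (invPowMean α c q)
      (α * q * (partner α c x ^ (-q - 1) - x ^ (-q - 1))) x := by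
  have hpartner : HasDerivAt (partner α c) (-α / (1 - α)) x := by
    unfold partner
    simpa using (((hasDerivAt_id x).const_mul α).const_sub c).div_const (1 - α)
  have hα' : 1 - α ≠ 0 := by linarith
  exact (((hasDerivAt_rpow_const (Or.inl hx.ne')).const_mul α).add
    (((hasDerivAt_rpow_const (Or.inl hy.ne')).comp x hpartner).const_mul (1 - α))).congr_deriv
    (by field_simp; ring)

lemma hasDerivAt_invPowMean_of_mem_Ioc (hα : α < 1) (hx : x ∈ Ioc 0 c) :
    HasDerivAt (invPowMean α c q) (α * q * (partner α c x ^ (-q - 1) - x ^ (-q - 1))) x :=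
  hasDerivAt_invPowMean hα hx.1 (hx.1.trans_le (le_partner hα hx.2))

lemma continuousOn_invPowMean (hα : α < 1) : ContinuousOn (invPowMean α c q) (Ioc 0 c) :=
  fun _ hx => (hasDerivAt_invPowMean_of_mem_Ioc hα hx).continuousAt.continuousWithinAt

lemma strictAntiOn_invPowMean (hα : α ∈ Ioo 0 1) (hq : 0 < q) :
    StrictAntiOn (invPowMean α c q) (Ioc 0 c) := by
  refine strictAntiOn_of_deriv_neg (convex_Ioc 0 c) (continuousOn_invPowMean hα.2) fun x hx => ?_
  rw [interior_Ioc] at hx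
  rw [(hasDerivAt_invPowMean_of_mem_Ioc hα.2 (Ioo_subset_Ioc_self hx)).deriv]
  have : partner α c x ^ (-q - 1) < x ^ (-q - 1) :=
    rpow_lt_rpow_of_neg hx.1 (lt_partner hα.2 hx.2) (by linarith)
  exact mul_neg_of_pos_of_neg (mul_pos hα.1 hq) (sub_neg.2 this)

lemma weighted_inv_rpow_mem_Ioc (hα : α ∈ Ioo 0 1) (hq : 0 < q) (hx : 0 < x) (hxy : x ≤ y) :
    α / x ^ q + (1 - α) / y ^ q ∈ Ioc (α / x ^ q) (1 / x ^ q) := by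
  have hxq : 0 < x ^ q := rpow_pos_of_pos hx q
  have hyq : 0 < y ^ q := rpow_pos_of_pos (hx.trans_le hxy) q
  refine ⟨lt_add_of_pos_right _ (div_pos (by linarith [hα.2]) hyq), ?_⟩
  calc α / x ^ q + (1 - α) / y ^ q ≤ α / x ^ q + (1 - α) / x ^ q := by
        gcongr
        linarith [hα.2]
    _ = 1 / x ^ q := by ring

lemma mem_Ioc_rpow_one_div (hα : 0 < α) (hq : 0 < q) (hx : 0 < x)
    (h : γ ∈ Ioc (α / x ^ q) (1 / x ^ q)) :
    x ∈ Ioc ((α / γ) ^ (1 / q)) ((1 / γ) ^ (1 / q)) := by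
  have hxq : 0 < x ^ q := rpow_pos_of_pos hx q
  have hγ : 0 < γ := (div_pos hα hxq).trans h.1
  rw [one_div q]
  constructor
  · rw [rpow_inv_lt_iff_of_pos (by positivity) hx.le hq, div_lt_iff₀ hγ, mul_comm]
    exact (div_lt_iff₀ hxq).1 h.1
  · rw [le_rpow_inv_iff_of_pos hx.le (by positivity) hq, le_div_iff₀ hγ, mul_comm]
    exact (le_div_iff₀ hxq).1 h.2

namespace IsSolution

variable {w w' : ℝ × ℝ}

lemma snd_eq_partner (hα : α < 1) (hw : IsSolution α c q γ w) : w.2 = partner α c w.1 :=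
  eq_partner_of_weighted_sum hα hw.2.2.1

lemma fst_mem_Ioc_zero (hα : α ∈ Ioo 0 1) (hw : IsSolution α c q γ w) : w.1 ∈ Ioc 0 c := by
  obtain ⟨h0, hle, hc, -⟩ := hw
  exact ⟨h0, by nlinarith [hα.2]⟩

lemma invPowMean_fst (hα : α < 1) (hw : IsSolution α c q γ w) :
    invPowMean α c q w.1 = γ := by
  have h2 := hw.snd_eq_partner hα
  rw [invPowMean_eq hw.1 (h2 ▸ hw.1.trans_le hw.2.1), ← h2]
  exact hw.2.2.2

lemma fst_mem_Ioc (hα : α ∈ Ioo 0 1) (hq : 0 < q) (hw : IsSolution α c q γ w) :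
    w.1 ∈ Ioc ((α / γ) ^ (1 / q)) ((1 / γ) ^ (1 / q)) := by
  obtain ⟨h0, hle, -, hγ⟩ := hw
  exact mem_Ioc_rpow_one_div hα.1 hq h0 (hγ ▸ weighted_inv_rpow_mem_Ioc hα hq h0 hle)

lemma unique (hα : α ∈ Ioo 0 1) (hq : 0 < q) (hw : IsSolution α c q γ w)
    (hw' : IsSolution α c q γ w') : w = w' := by
  have h1 : w.1 = w'.1 := (strictAntiOn_invPowMean hα hq).injOn
    (hw.fst_mem_Ioc_zero hα) (hw'.fst_mem_Ioc_zero hα)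
    ((hw.invPowMean_fst hα.2).trans (hw'.invPowMean_fst hα.2).symm)
  exact Prod.ext h1 (by rw [hw.snd_eq_partner hα.2, hw'.snd_eq_partner hα.2, h1])

end IsSolution

lemma isSolution_partner (hα : α < 1) (hx : 0 < x) (hxc : x ≤ c)
    (h : invPowMean α c q x = γ) : IsSolution α c q γ (x, partner α c x) := by
  have hle := le_partner hα hxc
  exact ⟨hx, hle, weighted_sum_partner hα, invPowMean_eq hx (hx.trans_le hle) ▸ h⟩

lemma exists_isSolution (hα : α ∈ Ioo 0 1) (hq : 0 < q) (hγ : 0 < γ)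
    (hc : (1 / γ) ^ (1 / q) ≤ c) : ∃ x, IsSolution α c q γ (x, partner α c x) := by
  set a := (α / γ) ^ (1 / q)
  set b := (1 / γ) ^ (1 / q)
  have ha : 0 < a := by have := hα.1; positivity
  have hab : a ≤ b := rpow_le_rpow (by have := hα.1; positivity)
    (div_le_div_of_nonneg_right hα.2.le hγ.le) (by positivity)
  have hsub : Icc a b ⊆ Ioc 0 c := fun x hx => ⟨ha.trans_le hx.1, hx.2.trans hc⟩
  have hpartner : ∀ x ∈ Icc a b, x ≤ partner α c x := fun x hx => le_partner hα.2 (hsub hx).2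
  have hmean : ∀ x ∈ Icc a b, invPowMean α c q x ∈ Ioc (α / x ^ q) (1 / x ^ q) := fun x hx => by
    rw [invPowMean_eq (hsub hx).1 ((hsub hx).1.trans_le (hpartner x hx))]
    exact weighted_inv_rpow_mem_Ioc hα hq (hsub hx).1 (hpartner x hx)
  have hroot : ∀ t, 0 ≤ t → ((t / γ) ^ (1 / q)) ^ q = t / γ := fun t ht => by
    rw [one_div, rpow_inv_rpow (by positivity) hq.ne']
  have hfa : γ < invPowMean α c q a := by
    have := (hmean a ⟨le_rfl, hab⟩).1
    rwa [hroot α hα.1.le, div_div_cancel₀ hα.1.ne'] at this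
  have hfb : invPowMean α c q b ≤ γ := by
    have := (hmean b ⟨hab, le_rfl⟩).2
    rwa [hroot 1 zero_le_one, one_div_one_div] at this
  obtain ⟨x, hx, hxγ⟩ := intermediate_value_Icc' hab
    ((continuousOn_invPowMean hα.2).mono hsub) ⟨hfb, hfa.le⟩
  exact ⟨x, isSolution_partner hα.2 (hsub hx).1 (hsub hx).2 hxγ⟩

end TwoPointSystem

theorem stmt7_general (p α β γ : ℝ) (hp : -1 < p) (hα : α ∈ Set.Ioo (0:ℝ) 1)
    (hγpos : 0 < γ)
    (hsolv : 1 ≤ (1 + β) * γ ^ (1 / (p + 1))) :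
    ∃ w : ℝ × ℝ,
      (0 < w.1 ∧ w.1 ≤ w.2 ∧ α * w.1 + (1 - α) * w.2 = 1 + β ∧
        α / w.1 ^ (p + 1) + (1 - α) / w.2 ^ (p + 1) = γ) ∧
      w.1 ∈ Set.Ioc ((α / γ) ^ (1 / (p + 1))) ((1 / γ) ^ (1 / (p + 1))) ∧
      ∀ w' : ℝ × ℝ,
        (0 < w'.1 ∧ w'.1 ≤ w'.2 ∧ α * w'.1 + (1 - α) * w'.2 = 1 + β ∧
          α / w'.1 ^ (p + 1) + (1 - α) / w'.2 ^ (p + 1) = γ) → w' = w := by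
  have hq : 0 < p + 1 := by linarith
  have hc : (1 / γ) ^ (1 / (p + 1)) ≤ 1 + β := by
    rw [div_rpow zero_le_one hγpos.le, one_rpow, div_le_iff₀ (by positivity)]
    exact hsolv
  obtain ⟨x, hx⟩ := exists_isSolution hα hq hγpos hc
  exact ⟨_, hx, hx.fst_mem_Ioc hα hq, fun w' hw' => IsSolution.unique hα hq hw' hx⟩

/-- Unique solvability of the two-equation system, with ω₁ in the stated
half-open interval. -/
theorem stmt7 (p α β γ : ℝ) (hp : -1 < p) (hα : α ∈ Set.Ioo (0:ℝ) 1)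
    (hβ : 0 ≤ β) (hγpos : 0 < γ)
    (hint₁ : (α / γ) ^ (1 / (p + 1)) < (1 / γ) ^ (1 / (p + 1)))
    (hint₂ : (1 / γ) ^ (1 / (p + 1)) ≤ (1 + β) / α)
    (hsolv : 1 ≤ (1 + β) * γ ^ (1 / (p + 1))) :
    ∃ w : ℝ × ℝ,
      (0 < w.1 ∧ w.1 ≤ w.2 ∧ α * w.1 + (1 - α) * w.2 = 1 + β ∧
        α / w.1 ^ (p + 1) + (1 - α) / w.2 ^ (p + 1) = γ) ∧
      w.1 ∈ Set.Ioc ((α / γ) ^ (1 / (p + 1))) ((1 / γ) ^ (1 / (p + 1))) ∧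
      ∀ w' : ℝ × ℝ,
        (0 < w'.1 ∧ w'.1 ≤ w'.2 ∧ α * w'.1 + (1 - α) * w'.2 = 1 + β ∧
          α / w'.1 ^ (p + 1) + (1 - α) / w'.2 ^ (p + 1) = γ) → w' = w :=
  stmt7_general p α β γ hp hα hγpos hsolv
end

section
/- Fix p > -1, α ∈ (0,1), β ≥ 0 and γ with γ ∈ [(1+β)^{-p},1] if p ≥ 0 (resp. γ ∈ [1,(1+β)^{-p}] if p ≤ 0). Define F(θ) = α/θ^{p+1} + (1-α)^{p+2}/((1+β-αθ)^{p+1}) - γ for θ ∈ ((α/γ)^{1/(p+1)}, (1/γ)^{1/(p+1)}]. Then F has exactly one root in this interval. -/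
/-!
On `(0, 1 + β]` the function `F` is strictly decreasing: its derivative is
`α (p + 1) (((1 - α) / (1 + β - α θ)) ^ (p + 2) - θ ^ (-(p + 2)))`, which is negative because
`(1 - α) θ < 1 + β - α θ` for `θ < 1 + β`. The constraint on `γ` gives
`γ ≥ (1 + β) ^ (-(p + 1))`, so the endpoints `a = (α / γ) ^ (1 / (p + 1))` and
`b = (1 / γ) ^ (1 / (p + 1))` satisfy `0 < a < b ≤ 1 + β`. Dropping the second
term, `F a > α / a ^ (p + 1) - γ = 0`; bounding it by `(1 - α) / b ^ (p + 1)`,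
`F b ≤ 1 / b ^ (p + 1) - γ = 0`. The intermediate value theorem and strict monotonicity give
exactly one root in `(a, b]`.
-/

open Real Set

theorem hasDerivAt_const_div_rpow (c q : ℝ) {x : ℝ} (hx : 0 < x) :
    HasDerivAt (fun x => c / x ^ q) (-(c * q) * x ^ (-(q + 1))) x := by
  have h : HasDerivAt (fun x => c * x ^ (-q)) (c * (-q * x ^ (-q - 1))) x :=
    (hasDerivAt_rpow_const (Or.inl hx.ne')).const_mul c
  refine (h.congr_of_eventuallyEq ?_).congr_deriv (by ring_nf)
  filter_upwards [lt_mem_nhds hx] with y hy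
  rw [rpow_neg hy.le, div_eq_mul_inv]

theorem rpow_one_div_rpow {x q : ℝ} (hx : 0 ≤ x) (hq : q ≠ 0) : (x ^ (1 / q)) ^ q = x := by
  rw [one_div, rpow_inv_rpow hx hq]

theorem one_div_rpow_one_div_le {c γ q : ℝ} (hc : 0 < c) (hγ : 0 < γ) (hq : 0 < q)
    (h : c ^ (-q) ≤ γ) : (1 / γ) ^ (1 / q) ≤ c := by
  rw [one_div q, rpow_inv_le_iff_of_pos (by positivity) hc.le hq, one_div,
    inv_le_comm₀ hγ (by positivity), ← rpow_neg hc.le]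
  exact h

theorem existsUnique_zero_of_strictAntiOn {f : ℝ → ℝ} {a b : ℝ} (hab : a ≤ b)
    (hf : ContinuousOn f (Icc a b)) (hanti : StrictAntiOn f (Icc a b)) (ha : 0 < f a)
    (hb : f b ≤ 0) : ∃! x, x ∈ Ioc a b ∧ f x = 0 := by
  obtain ⟨x, hx, hfx⟩ := intermediate_value_Icc' hab hf ⟨hb, ha.le⟩
  have hax : a ≠ x := by rintro rfl; exact ha.ne' hfx
  refine ⟨x, ⟨⟨lt_of_le_of_ne hx.1 hax, hx.2⟩, hfx⟩, fun y ⟨hy, hfy⟩ => ?_⟩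
  exact hanti.injOn (Ioc_subset_Icc_self hy) hx (hfy.trans hfx.symm)

/-- The paper's `F`: the second equation of the system after substituting
`ω₂ = (1 + β - α ω₁) / (1 - α)`. -/
noncomputable def reducedResidual (p α β γ θ : ℝ) : ℝ :=
  α / θ ^ (p + 1) + (1 - α) ^ (p + 2) / (1 + β - α * θ) ^ (p + 1) - γ

section
variable {p α β : ℝ}

theorem one_add_sub_mul_pos (hα : α < 1) {θ : ℝ} (hθ : θ ∈ Ioc 0 (1 + β)) :
    0 < 1 + β - α * θ := by
  nlinarith [hθ.1, hθ.2]

theorem one_sub_div_le_inv (hα : α < 1) {θ : ℝ} (hθ : θ ∈ Ioc 0 (1 + β)) :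
    (1 - α) / (1 + β - α * θ) ≤ θ⁻¹ := by
  rw [div_le_iff₀ (one_add_sub_mul_pos hα hθ), ← div_eq_inv_mul, le_div_iff₀ hθ.1]
  nlinarith [hθ.2]

theorem one_sub_div_lt_inv (hα : α < 1) {θ : ℝ} (hθ : θ ∈ Ioo 0 (1 + β)) :
    (1 - α) / (1 + β - α * θ) < θ⁻¹ := by
  rw [div_lt_iff₀ (one_add_sub_mul_pos hα (Ioo_subset_Ioc_self hθ)), ← div_eq_inv_mul,
    lt_div_iff₀ hθ.1]
  nlinarith [hθ.2]

theorem hasDerivAt_reducedResidual (γ : ℝ) {θ : ℝ} (hθ : 0 < θ) (hw : 0 < 1 + β - α * θ) :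
    HasDerivAt (reducedResidual p α β γ)
      (α * (p + 1) * ((1 - α) ^ (p + 2) * (1 + β - α * θ) ^ (-(p + 2)) - θ ^ (-(p + 2)))) θ := by
  have h₁ := hasDerivAt_const_div_rpow α (p + 1) hθ
  have h₂ := (hasDerivAt_const_div_rpow ((1 - α) ^ (p + 2)) (p + 1) hw).comp θ
    (((hasDerivAt_id θ).const_mul α).const_sub (1 + β))
  refine ((h₁.add h₂).sub_const γ).congr_deriv ?_
  rw [show -(p + 1 + 1) = -(p + 2) by ring]
  ring

theorem reducedResidual_continuousOn (hα : α < 1) (γ : ℝ) :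
    ContinuousOn (reducedResidual p α β γ) (Ioc 0 (1 + β)) := fun _ hθ =>
  (hasDerivAt_reducedResidual γ hθ.1 (one_add_sub_mul_pos hα hθ)).continuousAt.continuousWithinAt

theorem reducedResidual_strictAntiOn (hp : -1 < p) (hα : α ∈ Ioo (0 : ℝ) 1) (γ : ℝ) :
    StrictAntiOn (reducedResidual p α β γ) (Ioc 0 (1 + β)) := by
  refine strictAntiOn_of_deriv_neg (convex_Ioc 0 (1 + β))
    (reducedResidual_continuousOn hα.2 γ) fun θ hθ => ?_
  rw [interior_Ioc] at hθ
  have hw := one_add_sub_mul_pos hα.2 (Ioo_subset_Ioc_self hθ)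
  rw [(hasDerivAt_reducedResidual γ hθ.1 hw).deriv]
  have key : (1 - α) ^ (p + 2) * (1 + β - α * θ) ^ (-(p + 2)) < θ ^ (-(p + 2)) := by
    rw [rpow_neg hw.le, rpow_neg hθ.1.le, ← div_eq_mul_inv,
      ← div_rpow (by linarith [hα.2]) hw.le, ← inv_rpow hθ.1.le]
    exact rpow_lt_rpow (div_nonneg (by linarith [hα.2]) hw.le) (one_sub_div_lt_inv hα.2 hθ)
      (by linarith)
  exact mul_neg_of_pos_of_neg (mul_pos hα.1 (by linarith)) (by linarith)

theorem sub_lt_reducedResidual (hα : α < 1) (γ : ℝ) {θ : ℝ} (hw : 0 < 1 + β - α * θ) :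
    α / θ ^ (p + 1) - γ < reducedResidual p α β γ θ := by
  have : 0 < (1 - α) ^ (p + 2) / (1 + β - α * θ) ^ (p + 1) := by
    have : 0 < 1 - α := by linarith
    positivity
  unfold reducedResidual
  linarith

theorem reducedResidual_le (hp : -1 < p) (hα : α < 1) (γ : ℝ) {θ : ℝ}
    (hθ : θ ∈ Ioc 0 (1 + β)) : reducedResidual p α β γ θ ≤ 1 / θ ^ (p + 1) - γ := by
  have hα' : 0 < 1 - α := by linarith
  have hw := one_add_sub_mul_pos hα hθ
  have h : (1 - α) ^ (p + 2) / (1 + β - α * θ) ^ (p + 1) ≤ (1 - α) / θ ^ (p + 1) := by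
    have hpow := rpow_le_rpow (div_nonneg hα'.le hw.le) (one_sub_div_le_inv hα hθ)
      (by linarith : 0 ≤ p + 1)
    rw [div_rpow hα'.le hw.le, inv_rpow hθ.1.le] at hpow
    rw [show p + 2 = 1 + (p + 1) by ring, rpow_add hα', rpow_one, mul_div_assoc,
      div_eq_mul_inv (1 - α)]
    exact mul_le_mul_of_nonneg_left hpow hα'.le
  unfold reducedResidual
  rw [show 1 / θ ^ (p + 1) = α / θ ^ (p + 1) + (1 - α) / θ ^ (p + 1) by ring]
  linarith

theorem rpow_neg_add_one_le (hp : -1 < p) (hβ : 0 ≤ β) {γ : ℝ}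
    (hγ₁ : 0 ≤ p → γ ∈ Icc ((1 + β) ^ (-p)) 1) (hγ₂ : p ≤ 0 → γ ∈ Icc 1 ((1 + β) ^ (-p))) :
    (1 + β) ^ (-(p + 1)) ≤ γ := by
  have hβ' : 1 ≤ 1 + β := by linarith
  rcases le_total 0 p with hp0 | hp0
  · exact (rpow_le_rpow_of_exponent_le hβ' (by linarith)).trans (hγ₁ hp0).1
  · exact (rpow_le_one_of_one_le_of_nonpos hβ' (by linarith)).trans (hγ₂ hp0).1

end

/-- The function F(θ) = α/θ^{p+1} + (1-α)^{p+2}/(1+β-αθ)^{p+1} - γ has exactly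
one root in the interval ((α/γ)^{1/(p+1)}, (1/γ)^{1/(p+1)}]. -/
theorem stmt8 (p α β γ : ℝ) (hp : -1 < p) (hα : α ∈ Set.Ioo (0:ℝ) 1)
    (hβ : 0 ≤ β) (hγpos : 0 < γ)
    (hγ₁ : 0 ≤ p → γ ∈ Set.Icc ((1 + β) ^ (-p)) 1)
    (hγ₂ : p ≤ 0 → γ ∈ Set.Icc 1 ((1 + β) ^ (-p))) :
    ∃! θ : ℝ,
      θ ∈ Set.Ioc ((α / γ) ^ (1 / (p + 1))) ((1 / γ) ^ (1 / (p + 1))) ∧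
      α / θ ^ (p + 1) + (1 - α) ^ (p + 2) / (1 + β - α * θ) ^ (p + 1) - γ = 0 := by
  obtain ⟨hα₀, hα₁⟩ := hα
  have hq : 0 < p + 1 := by linarith
  have hab : (α / γ) ^ (1 / (p + 1)) < (1 / γ) ^ (1 / (p + 1)) :=
    rpow_lt_rpow (by positivity) (by gcongr) (by positivity)
  have hsub : Icc ((α / γ) ^ (1 / (p + 1))) ((1 / γ) ^ (1 / (p + 1))) ⊆ Ioc 0 (1 + β) :=
    fun θ hθ => ⟨(rpow_pos_of_pos (div_pos hα₀ hγpos) _).trans_le hθ.1, hθ.2.trans <|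
      one_div_rpow_one_div_le (by linarith) hγpos hq (rpow_neg_add_one_le hp hβ hγ₁ hγ₂)⟩
  have ha_pos : 0 < reducedResidual p α β γ ((α / γ) ^ (1 / (p + 1))) := by
    have := sub_lt_reducedResidual (p := p) hα₁ γ
      (one_add_sub_mul_pos hα₁ (hsub ⟨le_rfl, hab.le⟩))
    rwa [rpow_one_div_rpow (by positivity) hq.ne', div_div_cancel₀ hα₀.ne', sub_self] at this
  have hb_nonpos : reducedResidual p α β γ ((1 / γ) ^ (1 / (p + 1))) ≤ 0 := by
    have := reducedResidual_le hp hα₁ γ (hsub ⟨hab.le, le_rfl⟩)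
    rwa [rpow_one_div_rpow (by positivity) hq.ne', one_div_one_div, sub_self] at this
  exact existsUnique_zero_of_strictAntiOn hab.le
    ((reducedResidual_continuousOn hα₁ γ).mono hsub)
    ((reducedResidual_strictAntiOn hp ⟨hα₀, hα₁⟩ γ).mono hsub) ha_pos hb_nonpos
end

section
/- Monotonicity of the implicit solution in α: under the conditions of the two-equation system (p > -1, β ≥ 0, admissible γ*), the unique solution ω₁*(α) with ω₁ ≤ ω₂ satisfies ∂ω₁*/∂α = (ω₁*/(α(p+1)(z^{p+2}−1)))·((p+1)(1−z) + z(z^{p+1}−1)) ≥ 0, where z = ω₂*/ω₁* ≥ 1; that is, ω₁* is non-decreasing in α. -/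
/-!
Differentiating the two constraints along the solution curve gives two linear equations in
`ω₁'` and `ω₂'`; eliminating `ω₂'` and writing `z = ω₂ / ω₁` yields the stated formula. Its
sign is that of `(p + 1)(1 - z) + z (z^(p+1) - 1)`, which is nonnegative for `z ≥ 1` by
Bernoulli's inequality `z^(p+2) ≥ 1 + (p + 2)(z - 1)`. Where `ω₁ = ω₂`, the first constraint
forces `ω₁ = 1 + β`, the largest value `ω₁` can take, so the derivative vanishes there.
Monotonicity then follows from the mean value theorem.
-/

open Real Filter Topology Set

theorem Real.mul_one_sub_add_mul_rpow_sub_one_nonneg {q z : ℝ} (hq : 0 ≤ q) (hz : 0 < z) :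
    0 ≤ q * (1 - z) + z * (z ^ q - 1) := by
  have h := one_add_mul_self_le_rpow_one_add (s := z - 1) (by linarith) (p := q + 1) (by linarith)
  rw [add_sub_cancel, rpow_add_one hz.ne'] at h
  nlinarith

theorem HasDerivAt.div_rpow_const {f g : ℝ → ℝ} {f' g' x : ℝ} (q : ℝ) (hg : HasDerivAt g g' x)
    (hf : HasDerivAt f f' x) (hfx : 0 < f x) :
    HasDerivAt (fun s => g s / f s ^ q) ((g' - q * g x * f' / f x) / f x ^ q) x := by
  have hpow := hf.rpow_const (p := q) (Or.inl hfx.ne')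
  refine (hg.div hpow (rpow_pos_of_pos hfx q).ne').congr_deriv ?_
  rw [rpow_sub_one hfx.ne']
  have : 0 < f x ^ q := rpow_pos_of_pos hfx q
  field_simp

/-- The paper's formula for `∂ω₁*/∂α`, in terms of `x = ω₁*` and `z = ω₂* / ω₁*`. -/
noncomputable def implicitDeriv (p α x z : ℝ) : ℝ :=
  x / (α * (p + 1) * (z ^ (p + 2) - 1)) * ((p + 1) * (1 - z) + z * (z ^ (p + 1) - 1))

theorem implicitDeriv_nonneg {p x α z : ℝ} (hp : -1 < p) (hx : 0 ≤ x) (hα : 0 ≤ α)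
    (hz : 1 ≤ z) : 0 ≤ implicitDeriv p α x z := by
  have hzp : 1 ≤ z ^ (p + 2) := one_le_rpow hz (by linarith)
  have hq : 0 ≤ p + 1 := by linarith
  exact mul_nonneg (by positivity)
    (mul_one_sub_add_mul_rpow_sub_one_nonneg hq (by linarith))

section ImplicitDerivative

variable {w₁ w₂ : ℝ → ℝ} {p c γ α d : ℝ}

theorem hasDerivAt_of_mul_add_one_sub_mul_eq (hα : α ≠ 1)
    (h₁ : ∀ᶠ s in 𝓝 α, s * w₁ s + (1 - s) * w₂ s = c) (hd : HasDerivAt w₁ d α) :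
    HasDerivAt w₂ ((w₂ α - w₁ α - α * d) / (1 - α)) α := by
  have h1α : 1 - α ≠ 0 := sub_ne_zero.mpr hα.symm
  have hw₂ : w₂ =ᶠ[𝓝 α] fun s => (c - s * w₁ s) / (1 - s) := by
    have hne : ∀ᶠ s in 𝓝 α, 1 - s ≠ 0 :=
      (continuous_const.sub continuous_id).continuousAt.eventually_ne h1α
    filter_upwards [h₁, hne] with s hs hs'
    rw [eq_div_iff hs']
    linear_combination hs
  have hc : α * w₁ α + (1 - α) * w₂ α = c := h₁.self_of_nhds
  have hderiv := (((hasDerivAt_id' α).mul hd).const_sub c).div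
    ((hasDerivAt_id' α).const_sub 1) h1α
  refine hw₂.hasDerivAt_iff.mpr (hderiv.congr_deriv ?_)
  simp only [Pi.mul_apply]
  field_simp
  linear_combination -hc

theorem eq_implicitDeriv (hp : -1 < p) (hα : α ∈ Ioo 0 1) (hx : 0 < w₁ α)
    (hlt : w₁ α < w₂ α)
    (h₁ : ∀ᶠ s in 𝓝 α, s * w₁ s + (1 - s) * w₂ s = c)
    (h₂ : ∀ᶠ s in 𝓝 α, s / w₁ s ^ (p + 1) + (1 - s) / w₂ s ^ (p + 1) = γ)
    (hd : HasDerivAt w₁ d α) :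
    d = implicitDeriv p α (w₁ α) (w₂ α / w₁ α) := by
  have hy : 0 < w₂ α := hx.trans hlt
  have he := hasDerivAt_of_mul_add_one_sub_mul_eq hα.2.ne h₁ hd
  have hG := ((hasDerivAt_id' α).div_rpow_const (p + 1) hd hx).add
    (((hasDerivAt_id' α).const_sub 1).div_rpow_const (p + 1) he hy)
  have hzero := hG.unique ((hasDerivAt_const α γ).congr_of_eventuallyEq h₂)
  set x := w₁ α
  set y := w₂ α
  have hu : 0 < x ^ (p + 1) := rpow_pos_of_pos hx _
  have hv : 0 < y ^ (p + 1) := rpow_pos_of_pos hy _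
  have hxuyv : x * x ^ (p + 1) < y * y ^ (p + 1) :=
    mul_lt_mul hlt (rpow_le_rpow hx.le hlt.le (by linarith)) hu hy.le
  have h1α : 1 - α ≠ 0 := sub_ne_zero.mpr hα.2.ne'
  rw [implicitDeriv, show p + 2 = (p + 1) + 1 by ring, rpow_add_one (div_pos hy hx).ne', div_rpow hy.le hx.le]
  field_simp at hzero ⊢
  rw [eq_div_iff (mul_pos (mul_pos (by linarith) hα.1) (sub_pos.mpr hxuyv)).ne']
  linear_combination -hzero

theorem hasDerivAt_eq_zero_of_eq (hα : α ∈ Ioo 0 1)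
    (hsys : ∀ s ∈ Ioo 0 1, w₁ s ≤ w₂ s ∧ s * w₁ s + (1 - s) * w₂ s = c)
    (heq : w₁ α = w₂ α) (hd : HasDerivAt w₁ d α) : d = 0 := by
  have hc : w₁ α = c := by linear_combination (1 - α) * heq + (hsys α hα).2
  refine IsLocalMax.hasDerivAt_eq_zero ?_ hd
  filter_upwards [isOpen_Ioo.mem_nhds hα] with s hs
  obtain ⟨hle, hs_eq⟩ := hsys s hs
  nlinarith [hs.2]

end ImplicitDerivative

theorem stmt15_general (p β γ : ℝ) (hp : -1 < p)
    (w₁ w₂ d₁ : ℝ → ℝ)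
    (hsol : ∀ α ∈ Set.Ioo (0:ℝ) 1, 0 < w₁ α ∧ w₁ α ≤ w₂ α ∧
      α * w₁ α + (1 - α) * w₂ α = 1 + β ∧
      α / (w₁ α) ^ (p + 1) + (1 - α) / (w₂ α) ^ (p + 1) = γ)
    (hderiv : ∀ α ∈ Set.Ioo (0:ℝ) 1, HasDerivAt w₁ (d₁ α) α) :
    (∀ α ∈ Set.Ioo (0:ℝ) 1, w₁ α < w₂ α →
      d₁ α = (w₁ α / (α * (p + 1) * ((w₂ α / w₁ α) ^ (p + 2) - 1))) *
          ((p + 1) * (1 - w₂ α / w₁ α) +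
            (w₂ α / w₁ α) * ((w₂ α / w₁ α) ^ (p + 1) - 1)) ∧
      0 ≤ d₁ α) ∧
    MonotoneOn w₁ (Set.Ioo (0:ℝ) 1) := by
  have hnhds : ∀ α ∈ Ioo (0 : ℝ) 1, ∀ᶠ s in 𝓝 α, s ∈ Ioo (0 : ℝ) 1 :=
    fun α hα => isOpen_Ioo.mem_nhds hα
  have hformula : ∀ α ∈ Ioo (0 : ℝ) 1, w₁ α < w₂ α →
      d₁ α = implicitDeriv p α (w₁ α) (w₂ α / w₁ α) := fun α hα hlt =>
    eq_implicitDeriv hp hα (hsol α hα).1 hlt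
      ((hnhds α hα).mono fun s hs => (hsol s hs).2.2.1)
      ((hnhds α hα).mono fun s hs => (hsol s hs).2.2.2) (hderiv α hα)
  have hnonneg : ∀ α ∈ Ioo (0 : ℝ) 1, 0 ≤ d₁ α := by
    intro α hα
    obtain ⟨hx, hle, -⟩ := hsol α hα
    rcases hle.lt_or_eq with hlt | heq
    · rw [hformula α hα hlt]
      exact implicitDeriv_nonneg hp hx.le hα.1.le ((one_le_div hx).mpr hle)
    · exact (hasDerivAt_eq_zero_of_eq hα (fun s hs => ⟨(hsol s hs).2.1, (hsol s hs).2.2.1⟩)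
        heq (hderiv α hα)).ge
  refine ⟨fun α hα hlt => ⟨hformula α hα hlt, hnonneg α hα⟩, ?_⟩
  refine monotoneOn_of_hasDerivWithinAt_nonneg (f' := d₁) (convex_Ioo 0 1)
    (fun s hs => (hderiv s hs).continuousAt.continuousWithinAt) ?_ ?_ <;> rw [interior_Ioo]
  · exact fun s hs => (hderiv s hs).hasDerivWithinAt
  · exact hnonneg

/-- Monotonicity in α of the solution ω₁* of the two-equation system: its
derivative is given by the stated formula and is nonnegative, so ω₁* is
non-decreasing in α. -/
theorem stmt15 (p β γ : ℝ) (hp : -1 < p) (hβ : 0 ≤ β)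
    (hγ₁ : 0 ≤ p → γ ∈ Set.Icc ((1 + β) ^ (-p)) 1)
    (hγ₂ : p ≤ 0 → γ ∈ Set.Icc 1 ((1 + β) ^ (-p)))
    (w₁ w₂ d₁ : ℝ → ℝ)
    (hsol : ∀ α ∈ Set.Ioo (0:ℝ) 1, 0 < w₁ α ∧ w₁ α ≤ w₂ α ∧
      α * w₁ α + (1 - α) * w₂ α = 1 + β ∧
      α / (w₁ α) ^ (p + 1) + (1 - α) / (w₂ α) ^ (p + 1) = γ)
    (hderiv : ∀ α ∈ Set.Ioo (0:ℝ) 1, HasDerivAt w₁ (d₁ α) α) :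
    (∀ α ∈ Set.Ioo (0:ℝ) 1, w₁ α < w₂ α →
      d₁ α = (w₁ α / (α * (p + 1) * ((w₂ α / w₁ α) ^ (p + 2) - 1))) *
          ((p + 1) * (1 - w₂ α / w₁ α) +
            (w₂ α / w₁ α) * ((w₂ α / w₁ α) ^ (p + 1) - 1)) ∧
      0 ≤ d₁ α) ∧
    MonotoneOn w₁ (Set.Ioo (0:ℝ) 1) :=
  stmt15_general p β γ hp w₁ w₂ d₁ hsol hderiv
end

section
/- The inequality tr(M·(M*)^{-(p+1)}) ≤ t* implies λ_min(H)·t* ≥ λ_min(M^{-p}), where H = M^{-(p+1)/2}(M*)^{p+1}M^{-(p+1)/2}: equivalently, writing H = SΛSᵀ and B = SᵀM^{-p}S with diagonal entries b_i and eigenvalues λ₁ ≤ … ≤ λ_m of H, one has Σ_i b_i/λ_i ≤ t* and hence λ₁ ≥ b₁/t* ≥ λ_min(M^{-p})/t*. -/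
/-!
With `P = M^{(p+1)/2}`, the positive definite matrix `G = P (M*)^{-(p+1)} P` is the inverse of
`H`, and `P M^{-p} P = M` gives `tr (G M^{-p}) = tr (M (M*)^{-(p+1)}) ≤ t*`. Bounding `M^{-p}` below
by `λ_min(M^{-p}) • 1` in the Loewner order gives `λ_min(M^{-p}) tr G ≤ tr (G M^{-p})`, and
`tr G ≥ λ_max(G) = 1 / λ_min(H)`.
-/

open Matrix Real

open scoped MatrixOrder

lemma mul_mul_mul_eq_one_of_mul_eq_one {α : Type*} [Monoid α] {a b c d : α} (hab : a * b = 1)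
    (hcd : c * d = 1) : a * c * a * (b * d * b) = 1 := by
  rw [mul_assoc (a * c), ← mul_assoc a, ← mul_assoc a, hab, one_mul, mul_assoc a, ← mul_assoc c,
    hcd, one_mul, hab]

namespace Matrix

variable {n : Type*} [Fintype n] [DecidableEq n]

lemma inv_mem_spectrum_of_mul_eq_one {K : Type*} [Field K] {G H : Matrix n n K}
    (hGH : G * H = 1) {x : K} (hx : x ∈ spectrum K H) : x⁻¹ ∈ spectrum K G :=
  spectrum.inv₀_mem_inv (a := ⟨H, G, mul_eq_one_comm.mp hGH, hGH⟩) hx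

lemma PosDef.mul_mul_same {A B : Matrix n n ℝ} (hA : A.PosDef) (hB : B.PosDef) :
    (B * A * B).PosDef := by
  simpa only [hB.isHermitian.eq] using
    hA.conjTranspose_mul_mul_same (mulVec_injective_iff_isUnit.2 hB.isUnit)

lemma IsHermitian.sInf_spectrum_mem [Nonempty n] {A : Matrix n n ℝ} (hA : A.IsHermitian) :
    sInf (spectrum ℝ A) ∈ spectrum ℝ A :=
  (ContinuousFunctionalCalculus.spectrum_nonempty A hA.isSelfAdjoint).csInf_mem
    A.finite_spectrum

lemma PosDef.sInf_spectrum_pos [Nonempty n] {A : Matrix n n ℝ} (hA : A.PosDef) :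
    0 < sInf (spectrum ℝ A) :=
  hA.isStrictlyPositive.spectrum_pos hA.isHermitian.sInf_spectrum_mem

lemma PosSemidef.le_trace_of_mem_spectrum {A : Matrix n n ℝ} (hA : A.PosSemidef) {x : ℝ}
    (hx : x ∈ spectrum ℝ A) : x ≤ A.trace := by
  rw [hA.isHermitian.spectrum_real_eq_range_eigenvalues] at hx
  obtain ⟨i, rfl⟩ := hx
  rw [hA.isHermitian.trace_eq_sum_eigenvalues]
  exact Finset.single_le_sum (fun j _ => hA.eigenvalues_nonneg j) (Finset.mem_univ i)

lemma PosSemidef.trace_mul_nonneg {A B : Matrix n n ℝ} (hA : A.PosSemidef) (hB : B.PosSemidef) :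
    0 ≤ (A * B).trace := by
  obtain ⟨C, rfl⟩ := CStarAlgebra.nonneg_iff_eq_star_mul_self.mp hA.nonneg
  rw [mul_assoc, trace_mul_comm, star_eq_conjTranspose]
  exact (hB.mul_mul_conjTranspose_same C).trace_nonneg

lemma PosSemidef.sInf_spectrum_mul_trace_le {A B : Matrix n n ℝ} (hA : A.PosSemidef)
    (hB : B.IsHermitian) : sInf (spectrum ℝ B) * A.trace ≤ (A * B).trace := by
  have hle : algebraMap ℝ _ (sInf (spectrum ℝ B)) ≤ B :=
    (algebraMap_le_iff_le_spectrum hB.isSelfAdjoint).2 fun x hx =>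
      csInf_le B.finite_spectrum.bddBelow hx
  rw [le_iff, Algebra.algebraMap_eq_smul_one] at hle
  have := hA.trace_mul_nonneg hle
  rwa [mul_sub, Matrix.mul_smul, mul_one, trace_sub, trace_smul, smul_eq_mul, sub_nonneg] at this

end Matrix

section matRpow

variable {m : ℕ} {M : Matrix (Fin m) (Fin m) ℝ}

lemma matRpow_eq_cfc (hM : M.IsHermitian) (r : ℝ) :
    matRpow M r = cfc (fun x : ℝ => x ^ r) M := by
  rw [matRpow, dif_pos hM, hM.cfc_eq, IsHermitian.cfc, Unitary.conjStarAlgAut_apply]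
  rfl

lemma matRpow_posDef (hM : M.PosDef) (r : ℝ) : (matRpow M r).PosDef := by
  rw [matRpow_eq_cfc hM.isHermitian, ← isStrictlyPositive_iff_posDef,
    cfc_isStrictlyPositive_iff _ _ ((Set.toFinite _).continuousOn _)]
  exact fun x hx => rpow_pos_of_pos (hM.isStrictlyPositive.spectrum_pos hx) r

lemma matRpow_mul_matRpow (hM : M.PosDef) (r s : ℝ) :
    matRpow M r * matRpow M s = matRpow M (r + s) := by
  simp only [matRpow_eq_cfc hM.isHermitian]
  rw [← cfc_mul _ _ _ ((Set.toFinite _).continuousOn _) ((Set.toFinite _).continuousOn _)]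
  exact cfc_congr fun x hx => (rpow_add (hM.isStrictlyPositive.spectrum_pos hx) r s).symm

lemma matRpow_zero (hM : M.IsHermitian) : matRpow M 0 = 1 := by
  rw [matRpow_eq_cfc hM]
  simp only [rpow_zero]
  exact cfc_const_one ℝ M

lemma matRpow_one (hM : M.IsHermitian) : matRpow M 1 = M := by
  simp only [matRpow_eq_cfc hM, rpow_one, cfc_id' ℝ M]

lemma matRpow_mul_matRpow_neg (hM : M.PosDef) (r : ℝ) : matRpow M r * matRpow M (-r) = 1 := by
  rw [matRpow_mul_matRpow hM, add_neg_cancel, matRpow_zero hM.isHermitian]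

lemma matRpow_neg_mul_matRpow (hM : M.PosDef) (r : ℝ) : matRpow M (-r) * matRpow M r = 1 := by
  rw [matRpow_mul_matRpow hM, neg_add_cancel, matRpow_zero hM.isHermitian]

end matRpow

theorem stmt17_general (m : ℕ) (hm : 1 ≤ m) (p : ℝ)
    (M Mstar : Matrix (Fin m) (Fin m) ℝ) (hM : M.PosDef) (hMs : Mstar.PosDef)
    (hopt : (M * matRpow Mstar (-(p + 1))).trace ≤ (matRpow Mstar (-p)).trace) :
    sInf (spectrum ℝ (matRpow M (-p))) ≤
      sInf (spectrum ℝ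
          (matRpow M (-((p + 1) / 2)) * matRpow Mstar (p + 1) *
            matRpow M (-((p + 1) / 2)))) *
        (matRpow Mstar (-p)).trace := by
  have : Nonempty (Fin m) := ⟨⟨0, hm⟩⟩
  set A := matRpow M (-p)
  set P := matRpow M ((p + 1) / 2)
  set R := matRpow Mstar (-(p + 1))
  set H := matRpow M (-((p + 1) / 2)) * matRpow Mstar (p + 1) * matRpow M (-((p + 1) / 2))
  have hA : A.PosDef := matRpow_posDef hM _
  have hH : H.PosDef := (matRpow_posDef hMs _).mul_mul_same (matRpow_posDef hM _)
  have hG : (P * R * P).PosSemidef :=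
    ((matRpow_posDef hMs _).mul_mul_same (matRpow_posDef hM _)).posSemidef
  have hGH : P * R * P * H = 1 := mul_mul_mul_eq_one_of_mul_eq_one
    (matRpow_mul_matRpow_neg hM _) (matRpow_neg_mul_matRpow hMs _)
  have hPAP : P * A * P = M := by
    rw [matRpow_mul_matRpow hM, matRpow_mul_matRpow hM]
    conv_rhs => rw [← matRpow_one hM.isHermitian]
    ring_nf
  have htrace : (P * R * P * A).trace = (M * R).trace := by
    rw [mul_assoc, trace_mul_comm, ← mul_assoc, hPAP]
  have hinv := inv_mem_spectrum_of_mul_eq_one hGH hH.isHermitian.sInf_spectrum_mem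
  rw [← div_le_iff₀' hH.sInf_spectrum_pos, div_eq_mul_inv]
  calc _ ≤ sInf (spectrum ℝ A) * (P * R * P).trace :=
        mul_le_mul_of_nonneg_left (hG.le_trace_of_mem_spectrum hinv) hA.sInf_spectrum_pos.le
    _ ≤ (P * R * P * A).trace := hG.sInf_spectrum_mul_trace_le hA.isHermitian
    _ ≤ _ := htrace ▸ hopt

/-- tr(M·(M*)^{-(p+1)}) ≤ t* implies λ_min(H)·t* ≥ λ_min(M^{-p}) where
H = M^{-(p+1)/2}(M*)^{p+1}M^{-(p+1)/2} and t* = tr((M*)^{-p}). -/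
theorem stmt17 (m : ℕ) (hm : 1 ≤ m) (p : ℝ) (hp : -1 < p)
    (M Mstar : Matrix (Fin m) (Fin m) ℝ) (hM : M.PosDef) (hMs : Mstar.PosDef)
    (hopt : (M * matRpow Mstar (-(p + 1))).trace ≤ (matRpow Mstar (-p)).trace) :
    sInf (spectrum ℝ (matRpow M (-p))) ≤
      sInf (spectrum ℝ
          (matRpow M (-((p + 1) / 2)) * matRpow Mstar (p + 1) *
            matRpow M (-((p + 1) / 2)))) *
        (matRpow Mstar (-p)).trace :=
  stmt17_general m hm p M Mstar hM hMs hopt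
end

section
/- For the quadratic regression model x(s) = (1, s, s²)ᵀ on [-1,1] and the design ξ_τ = τδ_{-1} + (1-2τ)δ₀ + τδ₁ with τ = 1/4, ξ_{1/4} is A-optimal: the information matrix M = M(ξ_{1/4}) satisfies x(s)ᵀ M^{-2} x(s) ≤ tr(M^{-1}) for all s ∈ [-1,1], with equality at s ∈ {-1, 0, 1}. -/
open Matrix

/-! For M = M(ξ_{1/4}) one finds M⁻¹ = [[2,0,-2],[0,2,0],[-2,0,4]], so tr M⁻¹ = 8 and
M⁻¹ x(s) = (2 - 2s², 2s, 4s² - 2). As M⁻¹ is symmetric, x(s)ᵀ M⁻² x(s) = |M⁻¹ x(s)|²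
= 8 - 20 s²(1 - s²), which is at most 8 on [-1, 1], with equality exactly where s²(1 - s²)
vanishes. -/

lemma Matrix.IsSymm.dotProduct_mul_self_mulVec {n R : Type*} [Fintype n] [CommSemiring R]
    {A : Matrix n n R} (hA : A.IsSymm) (v : n → R) :
    v ⬝ᵥ (A * A) *ᵥ v = (A *ᵥ v) ⬝ᵥ (A *ᵥ v) := by
  rw [← mulVec_mulVec, dotProduct_mulVec, ← vecMul_transpose, hA.eq]

lemma quarterDesign_infoMatrix_eq :
    ((1/4 : ℝ) • vecMulVec ![1, -1, (-1) ^ 2] ![1, -1, (-1) ^ 2] +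
        (1/2 : ℝ) • vecMulVec ![1, 0, 0 ^ 2] ![1, 0, 0 ^ 2] +
        (1/4 : ℝ) • vecMulVec ![1, 1, 1 ^ 2] ![1, 1, 1 ^ 2] : Matrix (Fin 3) (Fin 3) ℝ) =
      !![1, 0, 1/2; 0, 1/2, 0; 1/2, 0, 1/2] := by
  ext i j
  fin_cases i <;> fin_cases j <;> norm_num [vecMulVec]

lemma quarterDesign_infoMatrix_inv :
    (!![1, 0, 1/2; 0, 1/2, 0; 1/2, 0, 1/2] : Matrix (Fin 3) (Fin 3) ℝ)⁻¹ =
      !![2, 0, -2; 0, 2, 0; -2, 0, 4] := by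
  refine inv_eq_right_inv ?_
  ext i j
  fin_cases i <;> fin_cases j <;> norm_num [mul_apply, Fin.sum_univ_succ]

lemma quarterDesign_variance (s : ℝ) :
    ![1, s, s ^ 2] ⬝ᵥ (!![2, 0, -2; 0, 2, 0; -2, 0, 4] * !![2, 0, -2; 0, 2, 0; -2, 0, 4] :
        Matrix (Fin 3) (Fin 3) ℝ) *ᵥ ![1, s, s ^ 2] =
      8 - 20 * (s ^ 2 * (1 - s ^ 2)) := by
  have hsymm : (!![2, 0, -2; 0, 2, 0; -2, 0, 4] : Matrix (Fin 3) (Fin 3) ℝ).IsSymm := by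
    ext i j
    fin_cases i <;> fin_cases j <;> rfl
  rw [hsymm.dotProduct_mul_self_mulVec]
  simp only [cons_mulVec, empty_mulVec, vec3_dotProduct']
  ring

/-- A-optimality of ξ_{1/4} = (1/4)δ₋₁ + (1/2)δ₀ + (1/4)δ₁ for quadratic
regression on [-1,1]: x(s)ᵀM⁻²x(s) ≤ tr(M⁻¹) on [-1,1], with equality at
s ∈ {-1,0,1}. -/
theorem stmt18 :
    let x : ℝ → Fin 3 → ℝ := fun s => ![1, s, s ^ 2]
    let M : Matrix (Fin 3) (Fin 3) ℝ :=
      (1/4 : ℝ) • Matrix.vecMulVec (x (-1)) (x (-1)) +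
        (1/2 : ℝ) • Matrix.vecMulVec (x 0) (x 0) +
        (1/4 : ℝ) • Matrix.vecMulVec (x 1) (x 1)
    (∀ s ∈ Set.Icc (-1 : ℝ) 1,
      x s ⬝ᵥ (M⁻¹ * M⁻¹) *ᵥ x s ≤ (M⁻¹).trace) ∧
    (∀ s ∈ ({-1, 0, 1} : Set ℝ),
      x s ⬝ᵥ (M⁻¹ * M⁻¹) *ᵥ x s = (M⁻¹).trace) := by
  intro x M
  have hMinv : M⁻¹ = !![2, 0, -2; 0, 2, 0; -2, 0, 4] := by
    rw [show M = _ from quarterDesign_infoMatrix_eq, quarterDesign_infoMatrix_inv]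
  have htrace : (M⁻¹).trace = 8 := by
    rw [hMinv, trace_fin_three_of]
    norm_num
  have hvariance (s : ℝ) : x s ⬝ᵥ (M⁻¹ * M⁻¹) *ᵥ x s = 8 - 20 * (s ^ 2 * (1 - s ^ 2)) := by
    rw [hMinv]
    exact quarterDesign_variance s
  refine ⟨fun s ⟨hs₁, hs₂⟩ => ?_, ?_⟩
  · have : 0 ≤ s ^ 2 * (1 - s ^ 2) := mul_nonneg (sq_nonneg s) (by nlinarith)
    rw [hvariance, htrace]
    linarith
  · rintro s (rfl | rfl | rfl) <;> rw [hvariance, htrace] <;> norm_num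
end

section
/- For the quadratic regression model x(s) = (1, s, s²)ᵀ on [-1,1], the design ξ_{1/3} = (1/3)δ_{-1} + (1/3)δ₀ + (1/3)δ₁ is D-optimal: with M = M(ξ_{1/3}), x(s)ᵀ M^{-1} x(s) ≤ 3 for all s ∈ [-1,1], with equality at s ∈ {-1, 0, 1}. -/
open Matrix

/-!
The information matrix of the equal-weight design on `{-1, 0, 1}` is inverted explicitly, which
turns the variance function into `d(s) = 3 - (9/2) s² (1 - s²)`. On `[-1, 1]` the subtracted
term is nonnegative, and it vanishes exactly at the support points `s ∈ {-1, 0, 1}`.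
-/

namespace QuadraticRegression

def feature (s : ℝ) : Fin 3 → ℝ := ![1, s, s ^ 2]

noncomputable def infoMatrix : Matrix (Fin 3) (Fin 3) ℝ :=
  (1/3 : ℝ) • vecMulVec (feature (-1)) (feature (-1)) +
    (1/3 : ℝ) • vecMulVec (feature 0) (feature 0) +
    (1/3 : ℝ) • vecMulVec (feature 1) (feature 1)

theorem infoMatrix_eq : infoMatrix = !![1, 0, 2/3; 0, 2/3, 0; 2/3, 0, 2/3] := by
  ext i j
  fin_cases i <;> fin_cases j <;>
    norm_num [infoMatrix, feature, vecMulVec_apply]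

theorem infoMatrix_inv : infoMatrix⁻¹ = !![3, 0, -3; 0, 3/2, 0; -3, 0, 9/2] := by
  refine inv_eq_right_inv ?_
  rw [infoMatrix_eq, mul_fin_three, one_fin_three]
  norm_num

noncomputable def variance (s : ℝ) : ℝ := feature s ⬝ᵥ infoMatrix⁻¹ *ᵥ feature s

theorem variance_eq (s : ℝ) : variance s = 3 - 9/2 * s ^ 2 * (1 - s ^ 2) := by
  rw [variance, infoMatrix_inv]
  simp only [feature, dotProduct, mulVec, of_apply, Fin.sum_univ_succ, cons_val', cons_val_zero,
    cons_val_succ, Finset.univ_unique, Fin.default_eq_zero, Finset.sum_singleton, cons_val_fin_one]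
  ring

theorem variance_le_three {s : ℝ} (hs : s ∈ Set.Icc (-1 : ℝ) 1) : variance s ≤ 3 := by
  have hs' : 0 ≤ 1 - s ^ 2 := by nlinarith [hs.1, hs.2]
  rw [variance_eq]
  exact sub_le_self _ (mul_nonneg (by positivity) hs')

theorem variance_eq_three_of_mem {s : ℝ} (hs : s ∈ ({-1, 0, 1} : Set ℝ)) : variance s = 3 := by
  rw [variance_eq]
  rcases hs with rfl | rfl | rfl <;> norm_num

end QuadraticRegression

open QuadraticRegression in
/-- D-optimality of ξ_{1/3} = (1/3)(δ₋₁ + δ₀ + δ₁) for quadratic regression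
on [-1,1]: x(s)ᵀM⁻¹x(s) ≤ 3 on [-1,1], with equality at s ∈ {-1,0,1}. -/
theorem stmt19 :
    let x : ℝ → Fin 3 → ℝ := fun s => ![1, s, s ^ 2]
    let M : Matrix (Fin 3) (Fin 3) ℝ :=
      (1/3 : ℝ) • Matrix.vecMulVec (x (-1)) (x (-1)) +
        (1/3 : ℝ) • Matrix.vecMulVec (x 0) (x 0) +
        (1/3 : ℝ) • Matrix.vecMulVec (x 1) (x 1)
    (∀ s ∈ Set.Icc (-1 : ℝ) 1, x s ⬝ᵥ M⁻¹ *ᵥ x s ≤ 3) ∧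
    (∀ s ∈ ({-1, 0, 1} : Set ℝ), x s ⬝ᵥ M⁻¹ *ᵥ x s = 3) :=
  ⟨fun _ hs => variance_le_three hs, fun _ hs => variance_eq_three_of_mem hs⟩
end
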